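/- Let M be a symmetric n×n matrix over GF(2) (n ≥ 2) and let a ≠ b be indices with M_{aa} = 0, M_{bb} = 1 and M_{ab} = 1. Let M″ be the (n−2)×(n−2) matrix indexed by the indices x, y distinct from a and b whose (x,y) entry is M_{xy} + M_{xa}·M_{yb} + M_{xb}·M_{ya} + M_{xa}·M_{ya}. Then rank(M) = rank(M″) + 2; equivalently, M and M″ have the same nullity over GF(2). -/

import Mathlib

/-! The principal block of `M` on `{a, b}` is `!![0, 1; 1, 1]`, which is invertible over `GF(2)`
with inverse `!![1, 1; 1, 0]`, and `M″` is exactly the Schur complement of that block. Block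
elimination turns `M` into `fromBlocks A 0 0 M″` by invertible transformations, so
`rank M = 2 + rank M″`. -/

open Matrix BigOperators

/-- The graph bracket polynomial of a looped graph specified by its Boolean
adjacency matrix `M` over `GF(2)`:
`[G](A,B,d) = ∑_Δ A^{ν(Δ)} B^{ρ(Δ)} d^{ν(M+Δ)}`, the sum over all diagonal
matrices `Δ` over `GF(2)` (encoded by their diagonal functions `f`). -/
noncomputable def gBracket {V : Type*} [Fintype V] [DecidableEq V] {K : Type*} [CommRing K]
    (M : Matrix V V (ZMod 2)) (A B d : K) : K :=
  ∑ f : V → ZMod 2,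
    A ^ (Fintype.card V - (Matrix.diagonal f).rank)
      * B ^ (Matrix.diagonal f).rank
      * d ^ (Fintype.card V - (M + Matrix.diagonal f).rank)

theorem Submodule.finrank_prod {K M N : Type*} [DivisionRing K] [AddCommGroup M]
    [AddCommGroup N] [Module K M] [Module K N]
    (p : Submodule K M) (q : Submodule K N) [FiniteDimensional K p] [FiniteDimensional K q] :
    Module.finrank K (p.prod q) = Module.finrank K p + Module.finrank K q := by
  let e : p.prod q ≃ₗ[K] p × q :=
    { toFun x := (⟨x.1.1, x.2.1⟩, ⟨x.1.2, x.2.2⟩)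
      invFun y := ⟨(y.1, y.2), y.1.2, y.2.2⟩
      map_add' _ _ := rfl
      map_smul' _ _ := rfl }
  rw [e.finrank_eq, Module.finrank_prod]

namespace Matrix

variable {K : Type*} [Field K]

theorem mulVecLin_fromBlocks_zero_zero {m₁ m₂ n₁ n₂ : Type*} [Fintype n₁] [Fintype n₂]
    (A : Matrix m₁ n₁ K) (D : Matrix m₂ n₂ K) :
    (fromBlocks A 0 0 D).mulVecLin =
      (LinearEquiv.sumArrowLequivProdArrow m₁ m₂ K K).symm.toLinearMap ∘ₗ
        (A.mulVecLin.prodMap D.mulVecLin) ∘ₗ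
          (LinearEquiv.sumArrowLequivProdArrow n₁ n₂ K K).toLinearMap := by
  ext v i
  rcases i with i | i <;>
    simp [fromBlocks_mulVec, LinearEquiv.sumArrowLequivProdArrow, Equiv.sumArrowEquivProdArrow]

theorem rank_fromBlocks_zero_zero {m₁ m₂ n₁ n₂ : Type*} [Fintype n₁] [Fintype n₂]
    (A : Matrix m₁ n₁ K) (D : Matrix m₂ n₂ K) :
    (fromBlocks A 0 0 D).rank = A.rank + D.rank := by
  rw [rank, mulVecLin_fromBlocks_zero_zero, LinearMap.range_comp,
    LinearMap.range_comp_of_range_eq_top _ (LinearEquiv.range _), LinearEquiv.finrank_map_eq,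
    LinearMap.range_prodMap, Submodule.finrank_prod, rank, rank]

theorem rank_eq_card_add_rank_schur {m n : Type*} [Fintype m] [Fintype n] [DecidableEq m]
    [DecidableEq n] (M : Matrix (m ⊕ n) (m ⊕ n) K) [Invertible M.toBlocks₁₁] :
    M.rank = Fintype.card m +
      (M.toBlocks₂₂ - M.toBlocks₂₁ * ⅟M.toBlocks₁₁ * M.toBlocks₁₂).rank := by
  conv_lhs => rw [← fromBlocks_toBlocks M, fromBlocks_eq_of_invertible₁₁]
  rw [rank_mul_eq_left_of_isUnit_det _ _ (by simp),
    rank_mul_eq_right_of_isUnit_det _ _ (by simp),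
    rank_fromBlocks_zero_zero, rank_of_isUnit _ (isUnit_of_invertible _)]

end Matrix

def Equiv.finTwoSumSubtypeNe {ι : Type*} [DecidableEq ι] {a b : ι} (hab : a ≠ b) :
    Fin 2 ⊕ {z // z ≠ a ∧ z ≠ b} ≃ ι where
  toFun := Sum.elim ![a, b] Subtype.val
  invFun z := if ha : z = a then .inl 0 else if hb : z = b then .inl 1 else .inr ⟨z, ha, hb⟩
  left_inv := by
    rintro (i | ⟨z, ha, hb⟩)
    · fin_cases i <;> simp [hab.symm]
    · simp [ha, hb]
  right_inv z := by
    dsimp only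
    split_ifs with ha hb
    · simp [ha]
    · simp [hb]
    · rfl

def pivotLocalCompMinor {ι : Type*} (M : Matrix ι ι (ZMod 2)) (a b : ι) :
    Matrix {z // z ≠ a ∧ z ≠ b} {z // z ≠ a ∧ z ≠ b} (ZMod 2) :=
  of fun x y => M x y + M x a * M y b + M x b * M y a + M x a * M y a

theorem rank_eq_rank_pivotLocalCompMinor_add_two {ι : Type*} [Fintype ι] [DecidableEq ι]
    (M : Matrix ι ι (ZMod 2)) (hsym : M.IsSymm) {a b : ι} (hab : a ≠ b)
    (haa : M a a = 0) (hbb : M b b = 1) (hMab : M a b = 1) :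
    M.rank = (pivotLocalCompMinor M a b).rank + 2 := by
  set e := Equiv.finTwoSumSubtypeNe hab
  have hpivot : (M.submatrix e e).toBlocks₁₁ = !![0, 1; 1, 1] := by
    ext i j
    fin_cases i <;> fin_cases j <;>
      simp [e, Equiv.finTwoSumSubtypeNe, toBlocks₁₁, haa, hbb, hMab, hsym.apply a b]
  have hinv : (M.submatrix e e).toBlocks₁₁ * !![1, 1; 1, 0] = 1 := by rw [hpivot]; decide
  let _ := invertibleOfRightInverse _ _ hinv
  have hschur : (M.submatrix e e).toBlocks₂₂ - (M.submatrix e e).toBlocks₂₁ *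
      ⅟(M.submatrix e e).toBlocks₁₁ * (M.submatrix e e).toBlocks₁₂ = pivotLocalCompMinor M a b := by
    rw [invOf_eq_right_inv hinv]
    ext x y
    simp only [e, Equiv.finTwoSumSubtypeNe, Equiv.coe_fn_mk, pivotLocalCompMinor, toBlocks₁₂,
      toBlocks₂₁, toBlocks₂₂, submatrix_apply, Sum.elim_inl, Sum.elim_inr, Matrix.sub_apply,
      of_apply, mul_apply, Fin.sum_univ_two, cons_val', cons_val_fin_one, cons_val_zero,
      cons_val_one, mul_one, mul_zero, add_zero, hsym.apply y.1 a, hsym.apply y.1 b]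
    rw [CharTwo.sub_eq_add]
    ring
  rw [← rank_submatrix M e e, rank_eq_card_add_rank_schur, hschur]
  simp [add_comm]

theorem rank_pivot_localcomp_minor_general {n : ℕ}
    (M : Matrix (Fin n) (Fin n) (ZMod 2)) (hsym : M.IsSymm)
    (a b : Fin n) (hab : a ≠ b)
    (haa : M a a = 0) (hbb : M b b = 1) (hMab : M a b = 1) :
    M.rank =
        (Matrix.of fun x y : {z : Fin n // z ≠ a ∧ z ≠ b} =>
          M x.1 y.1 + M x.1 a * M y.1 b + M x.1 b * M y.1 a + M x.1 a * M y.1 a).rank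
          + 2 ∧
    n - M.rank =
      (n - 2) -
        (Matrix.of fun x y : {z : Fin n // z ≠ a ∧ z ≠ b} =>
          M x.1 y.1 + M x.1 a * M y.1 b + M x.1 b * M y.1 a + M x.1 a * M y.1 a).rank := by
  change M.rank = (pivotLocalCompMinor M a b).rank + 2 ∧
    n - M.rank = (n - 2) - (pivotLocalCompMinor M a b).rank
  have hrank := rank_eq_rank_pivotLocalCompMinor_add_two M hsym hab haa hbb hMab
  have hcard : 2 + Fintype.card {z : Fin n // z ≠ a ∧ z ≠ b} = n := by
    simpa using Fintype.card_congr (Equiv.finTwoSumSubtypeNe hab)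
  have hle := rank_le_card_width (pivotLocalCompMinor M a b)
  exact ⟨hrank, by omega⟩

/-- If `M` is symmetric over `GF(2)` with `M a a = 0`, `M b b = 1` and
`M a b = 1` (`a ≠ b`), and `M''` is the matrix with entries
`M x y + M x a · M y b + M x b · M y a + M x a · M y a` (for `x, y ∉ {a,b}`),
then `rank M = rank M'' + 2`; equivalently `M` and `M''` have the same
nullity. -/
theorem rank_pivot_localcomp_minor {n : ℕ} (hn : 2 ≤ n)
    (M : Matrix (Fin n) (Fin n) (ZMod 2)) (hsym : M.IsSymm)
    (a b : Fin n) (hab : a ≠ b)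
    (haa : M a a = 0) (hbb : M b b = 1) (hMab : M a b = 1) :
    M.rank =
        (Matrix.of fun x y : {z : Fin n // z ≠ a ∧ z ≠ b} =>
          M x.1 y.1 + M x.1 a * M y.1 b + M x.1 b * M y.1 a + M x.1 a * M y.1 a).rank
          + 2 ∧
    n - M.rank =
      (n - 2) -
        (Matrix.of fun x y : {z : Fin n // z ≠ a ∧ z ≠ b} =>
          M x.1 y.1 + M x.1 a * M y.1 b + M x.1 b * M y.1 a + M x.1 a * M y.1 a).rank :=
  rank_pivot_localcomp_minor_general M hsym a b hab haa hbb hMab
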